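/- Let V_1, …, V_k be complex n × m matrices with Σ_{r=1}^k V_rᴴ * V_r = 1_m, and let Φ : Matrix n n ℂ → Matrix m m ℂ be Φ(a) = Σ_r V_rᴴ * a * V_r. For a Hermitian matrix m₀ ∈ Matrix n n ℂ (m₀ = m₀ᴴ), the following are equivalent: (1) m₀ lies in the multiplicative domain of Φ, i.e. Φ(m₀ * m₀) = Φ(m₀) * Φ(m₀); (2) m₀ commutes with V_r * V_sᴴ for all r, s. Moreover, in that case Φ(m₀ * a) = Φ(m₀) * Φ(a) and Φ(a * m₀) = Φ(a) * Φ(m₀) for all a ∈ Matrix n n ℂ. -/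

import Mathlib

/-! For `Φ a = ∑ r, V rᴴ * a * V r` with `∑ r, V rᴴ * V r = 1`, the Schwarz defect is a sum of
Gram matrices:
`Φ (aᴴ * a) - (Φ a)ᴴ * Φ a = ∑ r, (a * V r - V r * Φ a)ᴴ * (a * V r - V r * Φ a)`,
so it vanishes iff `a * V r = V r * Φ a` for every `r`. For Hermitian `a` the adjoint relation
`V sᴴ * a = Φ a * V sᴴ` follows, and together they give
`a * V r * V sᴴ = V r * Φ a * V sᴴ = V r * V sᴴ * a`. Conversely, if `a` commutes with every
`V r * V sᴴ`, then `Φ a * V sᴴ = ∑ r, V rᴴ * V r * V sᴴ * a = V sᴴ * a`. The two intertwining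
relations are exactly what pulls `Φ a` out of `Φ (a * b)` and `Φ (b * a)`. -/

open Matrix
open scoped ComplexOrder

namespace Matrix

variable {ι n m 𝕜 : Type*} [Fintype ι] [Fintype n] [Fintype m] [RCLike 𝕜]

theorem sum_conjTranspose_mul_self_eq_zero_iff {E : ι → Matrix n m 𝕜} :
    ∑ r, (E r)ᴴ * E r = 0 ↔ ∀ r, E r = 0 := by
  refine ⟨fun h r => ?_, fun h => by simp [h]⟩
  have htrace : ∑ r, ((E r)ᴴ * E r).trace = 0 := by rw [← trace_sum, h, trace_zero]
  rw [Finset.sum_eq_zero_iff_of_nonneg fun r _ =>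
    (posSemidef_conjTranspose_mul_self (E r)).trace_nonneg] at htrace
  exact trace_conjTranspose_mul_self_eq_zero_iff.1 (htrace r (Finset.mem_univ r))

def krausMap (V : ι → Matrix n m 𝕜) (a : Matrix n n 𝕜) : Matrix m m 𝕜 :=
  ∑ r, (V r)ᴴ * a * V r

variable {V : ι → Matrix n m 𝕜} {a : Matrix n n 𝕜}

omit [Fintype m] in
theorem krausMap_conjTranspose (V : ι → Matrix n m 𝕜) (a : Matrix n n 𝕜) :
    krausMap V aᴴ = (krausMap V a)ᴴ := by
  simp only [krausMap, conjTranspose_sum, conjTranspose_mul, conjTranspose_conjTranspose,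
    Matrix.mul_assoc]

theorem krausMap_mul_of_conjTranspose_mul_eq (h : ∀ r, (V r)ᴴ * a = krausMap V a * (V r)ᴴ)
    (b : Matrix n n 𝕜) : krausMap V (a * b) = krausMap V a * krausMap V b := by
  calc krausMap V (a * b) = ∑ r, krausMap V a * ((V r)ᴴ * b * V r) :=
        Finset.sum_congr rfl fun r _ => by simp only [← Matrix.mul_assoc, h r]
    _ = krausMap V a * krausMap V b := (Finset.mul_sum _ _ _).symm

theorem krausMap_mul_of_mul_eq (h : ∀ r, a * V r = V r * krausMap V a)
    (b : Matrix n n 𝕜) : krausMap V (b * a) = krausMap V b * krausMap V a := by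
  calc krausMap V (b * a) = ∑ r, (V r)ᴴ * b * V r * krausMap V a :=
        Finset.sum_congr rfl fun r _ => by simp only [Matrix.mul_assoc, h r]
    _ = krausMap V b * krausMap V a := (Finset.sum_mul _ _ _).symm

theorem conjTranspose_mul_eq_of_mul_eq (ha : a.IsHermitian)
    (h : ∀ r, a * V r = V r * krausMap V a) (r : ι) :
    (V r)ᴴ * a = krausMap V a * (V r)ᴴ := by
  simpa only [conjTranspose_mul, ha.eq, ← krausMap_conjTranspose] using
    congrArg conjTranspose (h r)

theorem commute_mul_conjTranspose_of_mul_eq (hl : ∀ r, (V r)ᴴ * a = krausMap V a * (V r)ᴴ)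
    (hr : ∀ r, a * V r = V r * krausMap V a) (r s : ι) : Commute a (V r * (V s)ᴴ) := by
  change a * (V r * (V s)ᴴ) = V r * (V s)ᴴ * a
  rw [← Matrix.mul_assoc, hr r, Matrix.mul_assoc, ← hl s, Matrix.mul_assoc]

variable [DecidableEq m] (hV : ∑ r, (V r)ᴴ * V r = 1)
include hV

theorem conjTranspose_mul_eq_of_commute (hc : ∀ r s, Commute a (V r * (V s)ᴴ)) (s : ι) :
    (V s)ᴴ * a = krausMap V a * (V s)ᴴ := by
  calc (V s)ᴴ * a = ∑ r, (V r)ᴴ * (V r * (V s)ᴴ) * a := by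
        simp only [← Matrix.mul_assoc, ← Matrix.sum_mul, hV, Matrix.one_mul]
    _ = krausMap V a * (V s)ᴴ := by
        simp only [krausMap, Matrix.sum_mul, Matrix.mul_assoc, ← (hc _ s).eq]

theorem sum_mul_sub_conjTranspose_mul_mul_sub (a : Matrix n n 𝕜) :
    ∑ r, (a * V r - V r * krausMap V a)ᴴ * (a * V r - V r * krausMap V a) =
      krausMap V (aᴴ * a) - (krausMap V a)ᴴ * krausMap V a := by
  set P := krausMap V a
  have expand : ∀ r, (a * V r - V r * P)ᴴ * (a * V r - V r * P) =
      (V r)ᴴ * (aᴴ * a) * V r - (V r)ᴴ * aᴴ * V r * P - Pᴴ * ((V r)ᴴ * a * V r) +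
        Pᴴ * ((V r)ᴴ * V r) * P := fun r => by
    simp only [conjTranspose_sub, conjTranspose_mul, Matrix.sub_mul, Matrix.mul_sub,
      Matrix.mul_assoc]
    abel
  simp only [expand, Finset.sum_add_distrib, Finset.sum_sub_distrib, ← Finset.sum_mul,
    ← Finset.mul_sum, hV]
  change krausMap V (aᴴ * a) - krausMap V aᴴ * P - Pᴴ * P + Pᴴ * 1 * P = _
  rw [krausMap_conjTranspose, Matrix.mul_one]
  abel

theorem krausMap_conjTranspose_mul_self_eq_iff (a : Matrix n n 𝕜) :
    krausMap V (aᴴ * a) = (krausMap V a)ᴴ * krausMap V a ↔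
      ∀ r, a * V r = V r * krausMap V a := by
  rw [← sub_eq_zero, ← sum_mul_sub_conjTranspose_mul_mul_sub hV,
    sum_conjTranspose_mul_self_eq_zero_iff]
  simp only [sub_eq_zero]

end Matrix

/-- A Hermitian matrix `m₀` lies in the multiplicative domain of the unital completely
positive map `Φ` iff it commutes with `V_r V_sᴴ` for all `r, s`; in that case `m₀`
multiplies through `Φ` on both sides. -/
theorem multiplicative_domain_iff_commutes
    {n m k : ℕ} (V : Fin k → Matrix (Fin n) (Fin m) ℂ)
    (hV : ∑ r, (V r)ᴴ * V r = 1)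
    (m₀ : Matrix (Fin n) (Fin n) ℂ) (hm₀ : m₀ = m₀ᴴ) :
    ((∑ r, (V r)ᴴ * (m₀ * m₀) * V r) =
        (∑ r, (V r)ᴴ * m₀ * V r) * (∑ r, (V r)ᴴ * m₀ * V r) ↔
      ∀ r s, m₀ * (V r * (V s)ᴴ) = (V r * (V s)ᴴ) * m₀) ∧
    ((∑ r, (V r)ᴴ * (m₀ * m₀) * V r) =
        (∑ r, (V r)ᴴ * m₀ * V r) * (∑ r, (V r)ᴴ * m₀ * V r) →
      ∀ a : Matrix (Fin n) (Fin n) ℂ,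
        (∑ r, (V r)ᴴ * (m₀ * a) * V r) =
          (∑ r, (V r)ᴴ * m₀ * V r) * (∑ r, (V r)ᴴ * a * V r) ∧
        (∑ r, (V r)ᴴ * (a * m₀) * V r) =
          (∑ r, (V r)ᴴ * a * V r) * (∑ r, (V r)ᴴ * m₀ * V r)) := by
  have hH : m₀.IsHermitian := hm₀.symm
  have hmul : krausMap V (m₀ * m₀) = krausMap V m₀ * krausMap V m₀ ↔
      ∀ r, m₀ * V r = V r * krausMap V m₀ := by
    simpa only [hH.eq, ← krausMap_conjTranspose] using
      krausMap_conjTranspose_mul_self_eq_iff hV m₀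
  have intertwines (h : krausMap V (m₀ * m₀) = krausMap V m₀ * krausMap V m₀) :
      (∀ r, (V r)ᴴ * m₀ = krausMap V m₀ * (V r)ᴴ) ∧ ∀ r, m₀ * V r = V r * krausMap V m₀ :=
    ⟨conjTranspose_mul_eq_of_mul_eq hH (hmul.1 h), hmul.1 h⟩
  refine ⟨⟨fun h => ?_, fun hc => ?_⟩, fun h a => ?_⟩
  · exact commute_mul_conjTranspose_of_mul_eq (intertwines h).1 (intertwines h).2
  · exact krausMap_mul_of_conjTranspose_mul_eq (conjTranspose_mul_eq_of_commute hV hc) m₀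
  · exact ⟨krausMap_mul_of_conjTranspose_mul_eq (intertwines h).1 a,
      krausMap_mul_of_mul_eq (intertwines h).2 a⟩
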